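/- In the setting of lying women in the men-proposing Gale-Shapley algorithm: if a man m is better-off (truly prefers N(m) to O(m)), then his new partner N(m) is a rejecter, i.e., N(m) rejected m at some point during the original truthful run. -/

import Mathlib

namespace GS

/-- The `k` most-preferred elements of `S` according to the rank function `rank`
(lower rank = more preferred); if `S` has at most `k` elements this is all of `S`. -/
def topk {α : Type*} [DecidableEq α] (rank : α → ℕ) (k : ℕ) (S : Finset α) : Finset α :=
  S.filter fun a => (S.filter fun b => rank b < rank a).card < k

/-- An instance of the stable-matching problem with `n` women and `n` men.
`mpref m w` is the rank man `m` assigns to woman `w` (lower = more preferred),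
and `wpref w m` is the rank woman `w` assigns to man `m`. -/
structure Instance (n : ℕ) where
  mpref : Fin n → Fin n → ℕ
  wpref : Fin n → Fin n → ℕ
  mprefInj : ∀ m, Function.Injective (mpref m)
  wprefInj : ∀ w, Function.Injective (wpref w)

variable {n : ℕ}

/-- `prefers p a b` : `a` is strictly preferred to `b` under rank function `p`. -/
def prefers (p : Fin n → ℕ) (a b : Fin n) : Prop := p a < p b

/-- Given the current state `avail m` (the women who have not yet rejected man `m`),
the set of women man `m` proposes to tonight: his most-preferred available woman
(a singleton, or empty if no woman is available). -/
def proposals (I : Instance n) (avail : Fin n → Finset (Fin n)) (m : Fin n) :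
    Finset (Fin n) := topk (I.mpref m) 1 (avail m)

/-- The men proposing to woman `w` tonight. -/
def proposersOf (I : Instance n) (avail : Fin n → Finset (Fin n)) (w : Fin n) :
    Finset (Fin n) := Finset.univ.filter fun m => w ∈ proposals I avail m

/-- The men rejected by woman `w` tonight: all of tonight's proposers except
her most-preferred one. -/
def rejectedBy (I : Instance n) (avail : Fin n → Finset (Fin n)) (w : Fin n) :
    Finset (Fin n) := proposersOf I avail w \ topk (I.wpref w) 1 (proposersOf I avail w)

/-- One night of the men-proposing Gale-Shapley algorithm. -/
def step (I : Instance n) (avail : Fin n → Finset (Fin n)) :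
    Fin n → Finset (Fin n) :=
  fun m => (avail m).filter fun w => m ∉ rejectedBy I avail w

/-- `nights I t m` : the set of women who have not rejected man `m` before night `t`
(initially all women). -/
def nights (I : Instance n) (t : ℕ) : Fin n → Finset (Fin n) :=
  (step I)^[t] (fun _ => Finset.univ)

/-- The algorithm has terminated by night `T`: no man is rejected on night `T`. -/
def Stopped (I : Instance n) (T : ℕ) : Prop := step I (nights I T) = nights I T

/-- On night `T`, each man `m` serenades exactly under the window of `μ m`. -/
def MatchesAt (I : Instance n) (T : ℕ) (μ : Fin n ≃ Fin n) : Prop :=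
  ∀ m, proposals I (nights I T) m = {μ m}

/-- The bijection `μ` (from men to women) is the outcome of the men-proposing
Gale-Shapley algorithm on instance `I`: for some night `T` no rejection occurs and
every man `m` is matched with `μ m`. -/
def IsGSMatching (I : Instance n) (μ : Fin n ≃ Fin n) : Prop :=
  ∃ T, Stopped I T ∧ MatchesAt I T μ

/-- Stability of a matching `μ` (men to women): there is no unmatched pair `(w, m)`
each of whom strictly prefers the other to their partner under `μ`. -/
def Stable (I : Instance n) (μ : Fin n ≃ Fin n) : Prop :=
  ¬ ∃ m w, μ m ≠ w ∧ I.mpref m w < I.mpref m (μ m) ∧ I.wpref w m < I.wpref w (μ.symm w)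

/-- The instance in which the women in `L` replace their true preferences by the
false preference rankings `f`, everyone else being truthful. -/
def liarInstance (I : Instance n) (L : Finset (Fin n))
    (f : Fin n → Fin n → ℕ) (hf : ∀ w, Function.Injective (f w)) : Instance n where
  mpref := I.mpref
  wpref := fun w => if w ∈ L then f w else I.wpref w
  mprefInj := I.mprefInj
  wprefInj := fun w => by split_ifs; exacts [hf w, I.wprefInj w]

end GS

/-! Since a man proposes to the women in his order of preference, a woman he truly
prefers to his final partner `O(m)` must have left his list of available women before
the run stopped, and a woman only leaves that list by rejecting him. -/

namespace GS

variable {n : ℕ}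

theorem notMem_of_mem_topk_one_of_lt {α : Type*} [DecidableEq α] {rank : α → ℕ}
    {S : Finset α} {a b : α} (ha : a ∈ topk rank 1 S) (hba : rank b < rank a) : b ∉ S := by
  intro hb
  rw [topk, Finset.mem_filter, Nat.lt_one_iff, Finset.card_eq_zero,
    Finset.filter_eq_empty_iff] at ha
  exact ha.2 hb hba

theorem nights_succ (I : Instance n) (t : ℕ) : nights I (t + 1) = step I (nights I t) :=
  Function.iterate_succ_apply' _ _ _

theorem mem_nights_succ_iff {I : Instance n} {t : ℕ} {m w : Fin n} :
    w ∈ nights I (t + 1) m ↔ w ∈ nights I t m ∧ m ∉ rejectedBy I (nights I t) w := by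
  rw [nights_succ, step, Finset.mem_filter]

theorem mem_nights_of_forall_notMem_rejectedBy {I : Instance n} {t : ℕ} {m w : Fin n}
    (h : ∀ s < t, m ∉ rejectedBy I (nights I s) w) : w ∈ nights I t m := by
  induction t with
  | zero => exact Finset.mem_univ w
  | succ t ih =>
    exact mem_nights_succ_iff.2
      ⟨ih fun s hs => h s (Nat.lt_succ_of_lt hs), h t (Nat.lt_succ_self t)⟩

end GS

open GS in
theorem better_off_man_implies_new_partner_rejecter_general (n : ℕ) (I : GS.Instance n)
    (T : ℕ) (O : Fin n ≃ Fin n) (hO : MatchesAt I T O)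
    (N : Fin n ≃ Fin n)
    (m : Fin n) (hbetter : prefers (I.mpref m) (N m) (O m)) :
    ∃ t ≤ T, m ∈ rejectedBy I (nights I t) (N m) := by
  have hOm : O m ∈ proposals I (nights I T) m := by
    rw [hO m]
    exact Finset.mem_singleton_self _
  by_contra! hkept
  exact notMem_of_mem_topk_one_of_lt hOm hbetter <|
    mem_nights_of_forall_notMem_rejectedBy fun t ht => hkept t ht.le

open GS in
/-- In the setting of lying women: if a man `m` is better-off (he truly prefers his
new partner `N(m)` to his original partner `O(m)`), then `N(m)` is a rejecter:
she rejected `m` on some night of the original truthful run. -/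
theorem better_off_man_implies_new_partner_rejecter (n : ℕ) (I : GS.Instance n)
    (L : Finset (Fin n)) (f : Fin n → Fin n → ℕ) (hf : ∀ w, Function.Injective (f w))
    (T : ℕ) (hT : Stopped I T) (O : Fin n ≃ Fin n) (hO : MatchesAt I T O)
    (N : Fin n ≃ Fin n) (hN : IsGSMatching (liarInstance I L f hf) N)
    (m : Fin n) (hbetter : prefers (I.mpref m) (N m) (O m)) :
    ∃ t ≤ T, m ∈ rejectedBy I (nights I t) (N m) :=
  better_off_man_implies_new_partner_rejecter_general n I T O hO N m hbetter
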